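/- arXiv:2401.16372 — 7 statements merged into one kernel-verified Lean document; each statement's English description precedes it below -/
import Mathlib

section
/- Let A ∈ ℝ^{n×n}, C ∈ ℝ^{q×n}, F ∈ ℝ^{r×n}, and let O be the observability matrix of the pair (C, A). If rank([O; F]) = rank(O) (i.e., the system (C, A; F) is functionally observable), then rank(F·Oᵀ) = rank(F); since Oᵀ is (up to ordering of blocks) the controllability matrix of the dual pair (Aᵀ, Cᵀ), this says that functional observability of (C, A; F) implies output controllability of the dual system (Aᵀ, Cᵀ; F) (weak duality, Theorem 1). -/
/-!
Functional observability says that the rows of `F` lie in the row space of `O`, i.e. `F = M * O`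
for some `M`. Then `F * Fᵀ = (F * Oᵀ) * Mᵀ`, so over an ordered field
`rank F = rank (F * Fᵀ) ≤ rank (F * Oᵀ) ≤ rank F`.
-/

open Matrix intervalIntegral

/-- Observability matrix of the pair `(C, A)`: the vertical block stack of
`C, C*A, C*A², …, C*A^(n-1)`, indexed so that entry `((k, i), j)` is `(C * A^k) i j`. -/
noncomputable def obsMat {n q : ℕ} (C : Matrix (Fin q) (Fin n) ℝ)
    (A : Matrix (Fin n) (Fin n) ℝ) : Matrix (Fin n × Fin q) (Fin n) ℝ :=
  fun ki j => (C * A ^ (ki.1 : ℕ)) ki.2 j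

/-- Observability Gramian `W(t₁) = ∫₀^{t₁} exp(Aᵀτ) Cᵀ C exp(Aτ) dτ` (entrywise integral). -/
noncomputable def obsGram {n q : ℕ} (A : Matrix (Fin n) (Fin n) ℝ)
    (C : Matrix (Fin q) (Fin n) ℝ) (t₁ : ℝ) : Matrix (Fin n) (Fin n) ℝ :=
  fun i j => ∫ τ in (0:ℝ)..t₁,
    (NormedSpace.exp (τ • Aᵀ) * Cᵀ * C * NormedSpace.exp (τ • A)) i j

namespace Matrix

variable {K : Type*} {m m' n : Type*} [Fintype m]

theorem span_row_fromRows_eq_of_rank_eq [Fintype m'] [Fintype n] [Field K] {O : Matrix m n K}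
    {F : Matrix m' n K} (h : (fromRows O F).rank = O.rank) :
    Submodule.span K (Set.range (fromRows O F).row) = Submodule.span K (Set.range O.row) := by
  refine (Submodule.eq_of_le_of_finrank_eq ?_ ?_).symm
  · exact Submodule.span_mono (Set.range_comp_subset_range Sum.inl (fromRows O F).row)
  · rwa [← rank_eq_finrank_span_row, ← rank_eq_finrank_span_row, eq_comm]

theorem exists_eq_mul_of_row_mem_span [CommRing K] {O : Matrix m n K} {F : Matrix m' n K}
    (h : ∀ i, F.row i ∈ Submodule.span K (Set.range O.row)) : ∃ M : Matrix m' m K, F = M * O := by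
  simp only [← range_vecMulLinear, LinearMap.mem_range, vecMulLinear_apply] at h
  choose M hM using h
  exact ⟨M, funext fun i => ((mul_apply_eq_vecMul (M : Matrix m' m K) O i).trans (hM i)).symm⟩

theorem exists_eq_mul_of_rank_fromRows_eq [Fintype m'] [Fintype n] [Field K] {O : Matrix m n K}
    {F : Matrix m' n K} (h : (fromRows O F).rank = O.rank) : ∃ M : Matrix m' m K, F = M * O := by
  refine exists_eq_mul_of_row_mem_span fun i => ?_
  rw [← span_row_fromRows_eq_of_rank_eq h]
  exact Submodule.subset_span ⟨Sum.inr i, rfl⟩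

theorem rank_mul_transpose_of_eq_mul [Fintype m'] [Fintype n] [Field K] [LinearOrder K]
    [IsStrictOrderedRing K] {O : Matrix m n K} {F : Matrix m' n K} {M : Matrix m' m K}
    (hF : F = M * O) : (F * Oᵀ).rank = F.rank := by
  refine le_antisymm (rank_mul_le_left _ _) ?_
  calc F.rank = (F * Fᵀ).rank := (rank_self_mul_transpose F).symm
    _ = (F * Oᵀ * Mᵀ).rank := by rw [Matrix.mul_assoc, ← transpose_mul, ← hF]
    _ ≤ (F * Oᵀ).rank := rank_mul_le_left _ _

end Matrix

/-- **Weak duality (Theorem 1).** If `(C, A; F)` is functionally observable, i.e.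
`rank([O; F]) = rank(O)` for the observability matrix `O` of `(C, A)`, then
`rank(F·Oᵀ) = rank(F)`, i.e. the dual system `(Aᵀ, Cᵀ; F)` is output controllable
(`Oᵀ` being the controllability matrix of `(Aᵀ, Cᵀ)` up to ordering of blocks). -/
theorem weak_duality {n q r : ℕ}
    (A : Matrix (Fin n) (Fin n) ℝ) (C : Matrix (Fin q) (Fin n) ℝ)
    (F : Matrix (Fin r) (Fin n) ℝ)
    (hfo : (Matrix.fromRows (obsMat C A) F).rank = (obsMat C A).rank) :
    (F * (obsMat C A)ᵀ).rank = F.rank := by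
  obtain ⟨M, hF⟩ := exists_eq_mul_of_rank_fromRows_eq hfo
  exact rank_mul_transpose_of_eq_mul hF
end

section
/- Let A ∈ ℝ^{n×n}, C ∈ ℝ^{q×n}, F ∈ ℝ^{r×n} with rank(F) = r, let O be the observability matrix of (C, A), and let W(t₁) be the observability Gramian for some t₁ > 0 (which equals the controllability Gramian of the dual pair (Aᵀ, Cᵀ)). If rank([O; F]) = rank(O), then the r×r matrix F·W(t₁)·Fᵀ is invertible (weak duality in Gramian form: functional observability of (C, A; F) makes the dual target-control Gramian nonsingular). -/
/-!
For `x = Fᵀ v` one has `vᵀ (F W Fᵀ) v = xᵀ W x = ∫₀^{t₁} ‖C exp(τA) x‖² dτ`. If this vanishes,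
then `C exp(τA) x = 0` on `[0, t₁]`, and differentiating `k` times at `τ = 0` gives `C Aᵏ x = 0`,
i.e. `O x = 0`. The rank condition says `ker O ⊆ ker F`, so `F Fᵀ v = F x = 0`; since `F` has
full row rank, `F Fᵀ` is invertible and `v = 0`.
-/

open Matrix intervalIntegral

open Set MeasureTheory Module

theorem eqOn_zero_of_intervalIntegral_eq_zero {f : ℝ → ℝ} {a b : ℝ} (hab : a < b)
    (hf : ContinuousOn f (Icc a b)) (hnn : ∀ x ∈ Icc a b, 0 ≤ f x)
    (h : ∫ x in a..b, f x = 0) : EqOn f 0 (Icc a b) := by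
  have hnn' : 0 ≤ᵐ[volume.restrict (Ioc a b)] f :=
    (ae_restrict_iff' measurableSet_Ioc).2 (.of_forall fun x hx => hnn x (Ioc_subset_Icc_self hx))
  have hae := (integral_eq_zero_iff_of_le_of_nonneg_ae hab.le hnn'
    (hf.intervalIntegrable_of_Icc hab.le)).1 h
  rw [Measure.restrict_congr_set Ioc_ae_eq_Icc] at hae
  exact Measure.eqOn_Icc_of_ae_eq _ hab.ne hae hf continuousOn_const

namespace Matrix

section Linear

variable {K l m n : Type*} [Field K]

theorem isUnit_of_rank_eq_card [Fintype m] [DecidableEq m] {A : Matrix m m K}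
    (h : A.rank = Fintype.card m) : IsUnit A := by
  have htop : LinearMap.range A.mulVecLin = ⊤ :=
    Submodule.eq_top_of_finrank_eq (by rwa [finrank_fintype_fun_eq_card])
  exact mulVec_surjective_iff_isUnit.1 (LinearMap.range_eq_top.1 htop)

theorem mulVec_eq_zero_of_rank_fromRows_eq [Fintype n] {O : Matrix l n K} {F : Matrix m n K}
    (h : (fromRows O F).rank = O.rank) {x : n → K} (hx : O *ᵥ x = 0) : F *ᵥ x = 0 := by
  have hle : LinearMap.ker (fromRows O F).mulVecLin ≤ LinearMap.ker O.mulVecLin := fun y hy => by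
    rw [LinearMap.mem_ker, mulVecLin_apply, fromRows_mulVec] at hy
    rw [LinearMap.mem_ker, mulVecLin_apply]
    exact funext fun i => congrFun hy (Sum.inl i)
  have hfinrank : finrank K (LinearMap.ker (fromRows O F).mulVecLin) =
      finrank K (LinearMap.ker O.mulVecLin) := by
    have := LinearMap.finrank_range_add_finrank_ker (fromRows O F).mulVecLin
    have := LinearMap.finrank_range_add_finrank_ker O.mulVecLin
    unfold rank at h
    omega
  have hxker : x ∈ LinearMap.ker (fromRows O F).mulVecLin := by
    rw [Submodule.eq_of_le_of_finrank_eq hle hfinrank]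
    exact hx
  rw [LinearMap.mem_ker, mulVecLin_apply, fromRows_mulVec] at hxker
  exact funext fun i => congrFun hxker (Sum.inr i)

theorem dotProduct_transpose_mul_mulVec {R : Type*} [CommSemiring R] [Fintype l] [Fintype m]
    (N : Matrix l m R) (x : m → R) : x ⬝ᵥ ((Nᵀ * N) *ᵥ x) = (N *ᵥ x) ⬝ᵥ (N *ᵥ x) := by
  rw [← mulVec_mulVec, dotProduct_mulVec, vecMul_transpose]

theorem dotProduct_mul_mul_transpose_mulVec {R : Type*} [CommSemiring R] [Fintype l] [Fintype m]
    (F : Matrix l m R) (W : Matrix m m R) (u : l → R) :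
    u ⬝ᵥ ((F * W * Fᵀ) *ᵥ u) = (Fᵀ *ᵥ u) ⬝ᵥ (W *ᵥ (Fᵀ *ᵥ u)) := by
  rw [← mulVec_mulVec, ← mulVec_mulVec, dotProduct_mulVec, ← mulVec_transpose]

end Linear

section Exp

variable {l m : Type*} [Fintype l] [Fintype m] [DecidableEq m]

theorem continuous_exp_smul (A : Matrix m m ℝ) :
    Continuous fun τ : ℝ => NormedSpace.exp (τ • A) := by
  let _ : NormedRing (Matrix m m ℝ) := Matrix.linftyOpNormedRing
  let _ : NormedAlgebra ℝ (Matrix m m ℝ) := Matrix.linftyOpNormedAlgebra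
  exact continuous_iff_continuousAt.2 fun τ => (hasDerivAt_exp_smul_const' A τ).continuousAt

theorem hasDerivAt_mul_exp_smul_mulVec (B : Matrix l m ℝ) (A : Matrix m m ℝ) (x : m → ℝ)
    (τ : ℝ) :
    HasDerivAt (fun t : ℝ => (B * NormedSpace.exp (t • A)) *ᵥ x)
      ((B * A * NormedSpace.exp (τ • A)) *ᵥ x) τ := by
  let _ : NormedRing (Matrix m m ℝ) := Matrix.linftyOpNormedRing
  let _ : NormedAlgebra ℝ (Matrix m m ℝ) := Matrix.linftyOpNormedAlgebra
  let L : Matrix m m ℝ →ₗ[ℝ] (l → ℝ) :=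
    { toFun := fun M => (B * M) *ᵥ x
      map_add' := fun M N => by simp [Matrix.mul_add, add_mulVec]
      map_smul' := fun c M => by simp [Matrix.mul_smul, smul_mulVec] }
  have hexp : HasDerivAt (fun t : ℝ => NormedSpace.exp (t • A)) (A * NormedSpace.exp (τ • A)) τ :=
    hasDerivAt_exp_smul_const' A τ
  rw [Matrix.mul_assoc]
  exact L.toContinuousLinearMap.hasFDerivAt.comp_hasDerivAt τ hexp

variable {B : Matrix l m ℝ} {A : Matrix m m ℝ} {x : m → ℝ} {a b : ℝ}

theorem eqOn_mul_mul_exp_smul_mulVec_zero (hab : a < b)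
    (h : EqOn (fun τ => (B * NormedSpace.exp (τ • A)) *ᵥ x) 0 (Icc a b)) :
    EqOn (fun τ => (B * A * NormedSpace.exp (τ • A)) *ᵥ x) 0 (Icc a b) := fun τ hτ =>
  (uniqueDiffOn_Icc hab τ hτ).eq_deriv _ (hasDerivAt_mul_exp_smul_mulVec B A x τ).hasDerivWithinAt
    ((hasDerivWithinAt_const τ _ 0).congr h (h hτ))

theorem eqOn_mul_pow_mul_exp_smul_mulVec_zero (hab : a < b)
    (h : EqOn (fun τ => (B * NormedSpace.exp (τ • A)) *ᵥ x) 0 (Icc a b)) (k : ℕ) :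
    EqOn (fun τ => (B * A ^ k * NormedSpace.exp (τ • A)) *ᵥ x) 0 (Icc a b) := by
  induction k generalizing B with
  | zero => simpa using h
  | succ k ih =>
    simpa only [pow_succ', ← Matrix.mul_assoc] using ih (eqOn_mul_mul_exp_smul_mulVec_zero hab h)

end Exp

theorem dotProduct_mulVec_eq_intervalIntegral {l m : Type*} [Fintype l] [Fintype m]
    {W : Matrix l m ℝ} {M : ℝ → Matrix l m ℝ} {a b : ℝ}
    (hW : ∀ i j, W i j = ∫ τ in a..b, M τ i j)
    (hM : ∀ i j, IntervalIntegrable (fun τ => M τ i j) volume a b) (x : l → ℝ) (y : m → ℝ) :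
    x ⬝ᵥ (W *ᵥ y) = ∫ τ in a..b, x ⬝ᵥ (M τ *ᵥ y) := by
  have hM' (i j) : IntervalIntegrable (fun τ => x i * (M τ i j * y j)) volume a b :=
    ((hM i j).mul_const _).const_mul _
  have hrow (i : l) : IntervalIntegrable (fun τ => ∑ j, x i * (M τ i j * y j)) volume a b := by
    simpa only [← Finset.sum_fn] using IntervalIntegrable.sum Finset.univ fun j _ => hM' i j
  simp only [dotProduct, mulVec, hW, Finset.mul_sum]
  rw [integral_finsetSum fun i _ => hrow i]
  refine Finset.sum_congr rfl fun i _ => ?_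
  rw [integral_finsetSum fun j _ => hM' i j]
  simp only [← intervalIntegral.integral_mul_const, ← intervalIntegral.integral_const_mul]

end Matrix

section Observability

variable {n q : ℕ} {A : Matrix (Fin n) (Fin n) ℝ} {C : Matrix (Fin q) (Fin n) ℝ}

theorem dotProduct_obsGram_mulVec (t₁ : ℝ) (x : Fin n → ℝ) :
    x ⬝ᵥ (obsGram A C t₁ *ᵥ x) = ∫ τ in (0:ℝ)..t₁,
      ((C * NormedSpace.exp (τ • A)) *ᵥ x) ⬝ᵥ ((C * NormedSpace.exp (τ • A)) *ᵥ x) := by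
  have hintegrand (τ : ℝ) : NormedSpace.exp (τ • Aᵀ) * Cᵀ * C * NormedSpace.exp (τ • A) =
      (C * NormedSpace.exp (τ • A))ᵀ * (C * NormedSpace.exp (τ • A)) := by
    rw [← transpose_smul, exp_transpose, transpose_mul, Matrix.mul_assoc]
  have hN : Continuous fun τ : ℝ => C * NormedSpace.exp (τ • A) :=
    continuous_const.matrix_mul (continuous_exp_smul A)
  rw [dotProduct_mulVec_eq_intervalIntegral (W := obsGram A C t₁) (a := 0) (b := t₁)
    (M := fun τ => (C * NormedSpace.exp (τ • A))ᵀ * (C * NormedSpace.exp (τ • A)))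
    (fun i j => by simp only [obsGram, hintegrand])
    fun i j => ((hN.matrix_transpose.matrix_mul hN).matrix_elem i j).intervalIntegrable _ _]
  simp only [dotProduct_transpose_mul_mulVec]

theorem obsMat_mulVec_eq_zero {x : Fin n → ℝ} (h : ∀ k, (C * A ^ k) *ᵥ x = 0) :
    obsMat C A *ᵥ x = 0 :=
  funext fun ki => congrFun (h ki.1) ki.2

theorem obsMat_mulVec_eq_zero_of_dotProduct_obsGram_mulVec {t₁ : ℝ} (ht₁ : 0 < t₁)
    {x : Fin n → ℝ} (hx : x ⬝ᵥ (obsGram A C t₁ *ᵥ x) = 0) : obsMat C A *ᵥ x = 0 := by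
  set y := fun τ : ℝ => (C * NormedSpace.exp (τ • A)) *ᵥ x
  have hy : Continuous y := (continuous_const.matrix_mul (continuous_exp_smul A)).matrix_mulVec
    continuous_const
  rw [dotProduct_obsGram_mulVec] at hx
  have hnorm : EqOn (fun τ => y τ ⬝ᵥ y τ) 0 (Icc 0 t₁) :=
    eqOn_zero_of_intervalIntegral_eq_zero ht₁ (hy.dotProduct hy).continuousOn
      (fun τ _ => Finset.sum_nonneg fun i _ => mul_self_nonneg _) hx
  have hy0 : EqOn y 0 (Icc 0 t₁) := fun τ hτ => dotProduct_self_eq_zero.1 (hnorm hτ)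
  refine obsMat_mulVec_eq_zero fun k => ?_
  simpa using eqOn_mul_pow_mul_exp_smul_mulVec_zero ht₁ hy0 k (left_mem_Icc.2 ht₁.le)

end Observability

/-- **Weak duality in Gramian form.** If `rank(F) = r` and `(C, A; F)` is functionally
observable (`rank([O; F]) = rank(O)`), then for any `t₁ > 0` the `r × r` matrix
`F · W(t₁) · Fᵀ` is invertible, where `W(t₁)` is the observability Gramian. -/
theorem weak_duality_gramian {n q r : ℕ}
    (A : Matrix (Fin n) (Fin n) ℝ) (C : Matrix (Fin q) (Fin n) ℝ)
    (F : Matrix (Fin r) (Fin n) ℝ) (t₁ : ℝ) (ht₁ : 0 < t₁)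
    (hF : F.rank = r)
    (hfo : (Matrix.fromRows (obsMat C A) F).rank = (obsMat C A).rank) :
    IsUnit (F * obsGram A C t₁ * Fᵀ) := by
  refine mulVec_injective_iff_isUnit.1 <|
    (injective_iff_map_eq_zero (F * obsGram A C t₁ * Fᵀ).mulVecLin).2 fun v hv => ?_
  rw [mulVecLin_apply] at hv
  have hWx : (Fᵀ *ᵥ v) ⬝ᵥ (obsGram A C t₁ *ᵥ (Fᵀ *ᵥ v)) = 0 := by
    rw [← dotProduct_mul_mul_transpose_mulVec, hv, dotProduct_zero]
  have hFx : F *ᵥ (Fᵀ *ᵥ v) = 0 := mulVec_eq_zero_of_rank_fromRows_eq hfo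
    (obsMat_mulVec_eq_zero_of_dotProduct_obsGram_mulVec ht₁ hWx)
  have hFFt : IsUnit (F * Fᵀ) :=
    isUnit_of_rank_eq_card (by rw [rank_self_mul_transpose, hF, Fintype.card_fin])
  exact mulVec_injective_iff_isUnit.2 hFFt (by rw [← mulVec_mulVec, hFx, mulVec_zero])
end

section
/- Let A ∈ ℝ^{n×n}, C ∈ ℝ^{q×n}, F ∈ ℝ^{r×n} with rank(F) = r, let O be the observability matrix of (C, A), and let W(t₁) be the observability Gramian for some t₁ > 0. If the images F(Im W(t₁)) and F(Ker W(t₁)) are orthogonal in ℝ^r, then rank([O; F]) = rank(O) holds if and only if rank(F·Oᵀ) = rank(F); that is, under the orthogonality condition, the system (C, A; F) is functionally observable if and only if the dual system (Aᵀ, Cᵀ; F) is output controllable (strong duality, Theorem 2). -/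
/-
For `t₁ > 0` the Gramian `W = ∫₀^{t₁} Y(τ)ᵀ Y(τ) dτ`, `Y(τ) = C exp(τA)`, is symmetric and has the
same kernel as `O`. Indeed `vᵀ W v = ∫ ‖Y(τ) v‖²`, so `W v = 0` forces `C exp(τA) v = 0` on
`[0, t₁]`, and differentiating at interior points and letting `τ → 0` gives `C Aᵏ v = 0` for all
`k`. Conversely `C Aᵏ v = 0` for `k < n` propagates to all `k` by Cayley–Hamilton, hence to
`C exp(τA) v = 0` through the exponential series.

Functional observability `rank [O; F] = rank O` means `ker O ⊆ ker F`, i.e. `F = X O`, and then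
`rank F = rank (F Fᵀ) = rank (F Oᵀ Xᵀ) ≤ rank (F Oᵀ) ≤ rank F`. Conversely, since `O = X W` and
`W = Wᵀ`, full row rank of `F Oᵀ = F W Xᵀ` makes `F W` surjective; for `v ∈ ker O = ker W` write
`F v = F W u`, and orthogonality of `F(Im W)` and `F(Ker W)` gives `‖F v‖² = ⟨F W u, F v⟩ = 0`.
-/

open Matrix intervalIntegral

namespace Matrix

open LinearMap (ker range)

variable {ι κ μ : Type*} [Fintype ι]

section LinearAlgebra

variable {K : Type*}

section Field

variable [Field K]

theorem exists_eq_mul_of_ker_mulVecLin_le [Fintype κ] {M : Matrix κ ι K} {N : Matrix μ ι K}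
    (h : ker M.mulVecLin ≤ ker N.mulVecLin) : ∃ X : Matrix μ κ K, N = X * M := by
  classical
  have hrow : ∀ j, ∃ c : κ → K, ∑ i, c i • (LinearMap.proj i ∘ₗ M.mulVecLin) =
      LinearMap.proj j ∘ₗ N.mulVecLin := by
    intro j
    refine (Submodule.mem_span_range_iff_exists_fun K).mp (mem_span_of_iInf_ker_le_ker ?_)
    rw [← LinearMap.ker_pi]
    exact fun v hv => congrFun (h (by simpa [funext_iff] using hv)) j
  choose X hX using hrow
  refine ⟨Matrix.of X, ?_⟩
  ext j l
  have := LinearMap.congr_fun (hX j) (Pi.single l 1)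
  simpa [Matrix.mul_apply, mulVec_single] using this.symm

theorem rank_fromRows_eq_rank_iff (M : Matrix κ ι K) (N : Matrix μ ι K) :
    (fromRows M N).rank = M.rank ↔ ker M.mulVecLin ≤ ker N.mulVecLin := by
  have hker : ker (fromRows M N).mulVecLin = ker M.mulVecLin ⊓ ker N.mulVecLin := by
    ext v
    simp [fromRows_mulVec, funext_iff]
  have h1 := (fromRows M N).mulVecLin.finrank_range_add_finrank_ker
  have h2 := M.mulVecLin.finrank_range_add_finrank_ker
  rw [hker] at h1
  rw [← inf_eq_left, rank, rank]
  constructor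
  · intro h
    exact Submodule.eq_of_le_of_finrank_eq inf_le_left (by omega)
  · intro h
    rw [h] at h1
    omega

theorem mul_pow_mulVec_eq_zero_of_lt_card [DecidableEq ι] {C : Matrix κ ι K} {A : Matrix ι ι K}
    {v : ι → K} (h : ∀ k < Fintype.card ι, (C * A ^ k) *ᵥ v = 0) (k : ℕ) :
    (C * A ^ k) *ᵥ v = 0 := by
  rcases (Fintype.card ι).eq_zero_or_pos with hι | hι
  · have : IsEmpty ι := Fintype.card_eq_zero_iff.mp hι
    simp [Subsingleton.elim v 0]
  have hdeg : (Polynomial.X ^ k %ₘ A.charpoly).natDegree < Fintype.card ι := by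
    have hne : A.charpoly ≠ 1 := fun h1 => by
      simpa [h1, hι.ne] using A.charpoly_natDegree_eq_dim
    simpa [A.charpoly_natDegree_eq_dim] using
      Polynomial.natDegree_modByMonic_lt _ A.charpoly_monic hne
  rw [pow_eq_aeval_mod_charpoly, Polynomial.aeval_eq_sum_range' hdeg, Matrix.mul_sum, sum_mulVec]
  exact Finset.sum_eq_zero fun i hi => by
    rw [Matrix.mul_smul, smul_mulVec, h i (Finset.mem_range.mp hi), smul_zero]

end Field

variable [Field K] [LinearOrder K] [IsStrictOrderedRing K]

theorem rank_mul_transpose_eq_of_ker_le [Fintype κ] [Fintype μ] {M : Matrix κ ι K}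
    {N : Matrix μ ι K} (h : ker M.mulVecLin ≤ ker N.mulVecLin) : (N * Mᵀ).rank = N.rank := by
  obtain ⟨X, rfl⟩ := exists_eq_mul_of_ker_mulVecLin_le h
  refine le_antisymm (rank_mul_le_left _ _) ?_
  calc (X * M).rank = (X * M * (X * M)ᵀ).rank := (rank_self_mul_transpose _).symm
    _ = (X * M * Mᵀ * Xᵀ).rank := by rw [transpose_mul, Matrix.mul_assoc (X * M)]
    _ ≤ (X * M * Mᵀ).rank := rank_mul_le_left _ _

theorem ker_le_ker_of_rank_mul_transpose_eq [Fintype κ] [Fintype μ] {O : Matrix κ ι K}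
    {W : Matrix ι ι K} {F : Matrix μ ι K} (hW : Wᵀ = W)
    (hker : ker W.mulVecLin = ker O.mulVecLin) (hF : F.rank = Fintype.card μ)
    (horth : ∀ u v, W *ᵥ v = 0 → F *ᵥ (W *ᵥ u) ⬝ᵥ F *ᵥ v = 0)
    (h : (F * Oᵀ).rank = F.rank) : ker O.mulVecLin ≤ ker F.mulVecLin := by
  obtain ⟨X, hX⟩ := exists_eq_mul_of_ker_mulVecLin_le hker.le
  have hFW : (F * W).rank = Fintype.card μ := by
    refine le_antisymm (rank_le_card_height _) ?_
    calc Fintype.card μ = (F * Oᵀ).rank := by rw [h, hF]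
      _ = (F * W * Xᵀ).rank := by rw [hX, transpose_mul, hW, Matrix.mul_assoc]
      _ ≤ (F * W).rank := rank_mul_le_left _ _
  have hsurj : range (F * W).mulVecLin = ⊤ :=
    Submodule.eq_top_of_finrank_eq (by simpa [rank] using hFW)
  intro v hv
  obtain ⟨u, hu⟩ : F *ᵥ v ∈ range (F * W).mulVecLin := hsurj ▸ Submodule.mem_top
  have hWv : W *ᵥ v = 0 := hker.ge hv
  have := horth u v hWv
  rw [mulVec_mulVec, ← mulVecLin_apply, hu] at this
  exact dotProduct_self_eq_zero.mp this

end LinearAlgebra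

theorem mulVec_intervalIntegral {f : ℝ → Matrix κ ι ℝ} (hf : Continuous f) (a b : ℝ)
    (v : ι → ℝ) :
    (fun i j => ∫ τ in a..b, f τ i j) *ᵥ v = fun i => ∫ τ in a..b, (f τ *ᵥ v) i := by
  ext i
  simp only [mulVec, dotProduct]
  simp_rw [← intervalIntegral.integral_mul_const]
  exact (intervalIntegral.integral_finsetSum fun j _ =>
    ((hf.matrix_elem i j).mul continuous_const).intervalIntegrable a b).symm

theorem dotProduct_intervalIntegral {g : ℝ → ι → ℝ} (hg : Continuous g) (a b : ℝ) (u : ι → ℝ) :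
    u ⬝ᵥ (fun i => ∫ τ in a..b, g τ i) = ∫ τ in a..b, u ⬝ᵥ g τ := by
  simp only [dotProduct]
  simp_rw [← intervalIntegral.integral_const_mul]
  exact (intervalIntegral.integral_finsetSum fun i _ =>
    (continuous_const.mul ((continuous_apply i).comp hg)).intervalIntegrable a b).symm

section Exp

open NormedSpace Set Topology

noncomputable def mulMulVecCLM (M : Matrix κ ι ℝ) (v : ι → ℝ) : Matrix ι ι ℝ →L[ℝ] κ → ℝ :=
  (M.mulVecLin ∘ₗ (mulVecBilin ℝ ℝ).flip v).toContinuousLinearMap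

theorem mulMulVecCLM_apply (M : Matrix κ ι ℝ) (v : ι → ℝ) (X : Matrix ι ι ℝ) :
    mulMulVecCLM M v X = (M * X) *ᵥ v :=
  mulVec_mulVec v M X

variable [DecidableEq ι]

theorem exp_smul_transpose (A : Matrix ι ι ℝ) (τ : ℝ) : exp (τ • Aᵀ) = (exp (τ • A))ᵀ := by
  rw [← transpose_smul]
  exact exp_transpose _

theorem continuous_exp_smul_s2 (A : Matrix ι ι ℝ) : Continuous fun t : ℝ => exp (t • A) := by
  open scoped Matrix.Norms.Operator in
  exact exp_continuous.comp (continuous_id.smul continuous_const)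

theorem mul_exp_smul_mulVec_eq_zero {M : Matrix κ ι ℝ} {A : Matrix ι ι ℝ} {v : ι → ℝ}
    (h : ∀ k : ℕ, (M * A ^ k) *ᵥ v = 0) (τ : ℝ) : (M * exp (τ • A)) *ᵥ v = 0 := by
  open scoped Matrix.Norms.Operator in
  have hsum := (exp_series_hasSum_exp' (𝕂 := ℝ) (τ • A)).mapL (mulMulVecCLM M v)
  simp only [mulMulVecCLM_apply, smul_pow, Matrix.mul_smul, smul_mulVec, h, smul_zero] at hsum
  exact hsum.unique hasSum_zero

theorem hasDerivAt_mul_exp_smul_mulVec_s2 [Fintype κ] (M : Matrix κ ι ℝ) (A : Matrix ι ι ℝ)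
    (v : ι → ℝ) (τ : ℝ) :
    HasDerivAt (fun t : ℝ => (M * exp (t • A)) *ᵥ v) ((M * exp (τ • A)) *ᵥ (A *ᵥ v)) τ := by
  -- Terms built under the operator norm carry its instances, which `rw` cannot match against the
  -- norm-free ones of the statement (`exact` unifies them), so all rewriting happens first.
  have hfun : (fun t : ℝ => (M * exp (t • A)) *ᵥ v) = mulMulVecCLM M v ∘ fun t => exp (t • A) :=
    funext fun t => (mulMulVecCLM_apply M v _).symm
  have hval : (M * exp (τ • A)) *ᵥ (A *ᵥ v) = mulMulVecCLM M v (exp (τ • A) * A) := by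
    simp only [mulMulVecCLM_apply, mulVec_mulVec, Matrix.mul_assoc]
  rw [hfun, hval]
  open scoped Matrix.Norms.Operator in
  exact (mulMulVecCLM M v).hasFDerivAt.comp_hasDerivAt τ (hasDerivAt_exp_smul_const A τ)

theorem mul_pow_mulVec_eq_zero_of_eqOn_Icc [Fintype κ] {M : Matrix κ ι ℝ} {A : Matrix ι ι ℝ}
    {v : ι → ℝ} {t : ℝ} (ht : 0 < t) (h : EqOn (fun τ : ℝ => (M * exp (τ • A)) *ᵥ v) 0 (Icc 0 t))
    (k : ℕ) :
    (M * A ^ k) *ᵥ v = 0 := by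
  have hIoo : ∀ k : ℕ, EqOn (fun τ : ℝ => (M * exp (τ • A)) *ᵥ (A ^ k *ᵥ v)) 0 (Ioo 0 t) := by
    intro k
    induction k with
    | zero => simpa using h.mono Ioo_subset_Icc_self
    | succ k ih =>
      intro τ hτ
      have hloc : (fun s : ℝ => (M * exp (s • A)) *ᵥ (A ^ k *ᵥ v)) =ᶠ[𝓝 τ] fun _ => 0 :=
        Filter.eventually_of_mem (isOpen_Ioo.mem_nhds hτ) ih
      have := (hasDerivAt_mul_exp_smul_mulVec_s2 M A (A ^ k *ᵥ v) τ).unique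
        ((hasDerivAt_const τ 0).congr_of_eventuallyEq hloc)
      rwa [mulVec_mulVec v A, ← pow_succ'] at this
  have hcont : Continuous fun τ : ℝ => (M * exp (τ • A)) *ᵥ (A ^ k *ᵥ v) :=
    continuous_iff_continuousAt.mpr fun τ =>
      (hasDerivAt_mul_exp_smul_mulVec_s2 M A _ τ).continuousAt
  have h0 : (0 : ℝ) ∈ closure (Ioo 0 t) := by
    rw [closure_Ioo ht.ne]
    exact left_mem_Icc.mpr ht.le
  simpa [mulVec_mulVec] using (hIoo k).closure hcont continuous_const h0

end Exp

end Matrix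

section Gramian

open NormedSpace

variable {n q : ℕ}

theorem obsGram_integrand_eq (A : Matrix (Fin n) (Fin n) ℝ) (C : Matrix (Fin q) (Fin n) ℝ)
    (τ : ℝ) : exp (τ • Aᵀ) * Cᵀ * C * exp (τ • A) = (C * exp (τ • A))ᵀ * (C * exp (τ • A)) := by
  simp only [transpose_mul, exp_smul_transpose, Matrix.mul_assoc]

theorem obsGram_transpose (A : Matrix (Fin n) (Fin n) ℝ) (C : Matrix (Fin q) (Fin n) ℝ)
    (t : ℝ) : (obsGram A C t)ᵀ = obsGram A C t := by
  ext i j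
  refine intervalIntegral.integral_congr fun τ _ => ?_
  have hsymm : (exp (τ • Aᵀ) * Cᵀ * C * exp (τ • A))ᵀ = exp (τ • Aᵀ) * Cᵀ * C * exp (τ • A) := by
    rw [obsGram_integrand_eq, transpose_mul, transpose_transpose]
  exact congrFun (congrFun hsymm i) j

theorem obsGram_mulVec (A : Matrix (Fin n) (Fin n) ℝ) (C : Matrix (Fin q) (Fin n) ℝ) (t : ℝ)
    (v : Fin n → ℝ) :
    obsGram A C t *ᵥ v =
      fun i => ∫ τ in (0 : ℝ)..t, ((C * exp (τ • A))ᵀ *ᵥ ((C * exp (τ • A)) *ᵥ v)) i := by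
  have hY : Continuous fun τ : ℝ => C * exp (τ • A) :=
    continuous_const.matrix_mul (continuous_exp_smul_s2 A)
  have hW : obsGram A C t =
      fun i j => ∫ τ in (0 : ℝ)..t, ((C * exp (τ • A))ᵀ * (C * exp (τ • A))) i j := by
    ext i j
    exact intervalIntegral.integral_congr fun τ _ => by rw [obsGram_integrand_eq]
  simp_rw [hW, mulVec_intervalIntegral (hY.matrix_transpose.matrix_mul hY), mulVec_mulVec]

theorem obsGram_mulVec_eq_zero_iff (A : Matrix (Fin n) (Fin n) ℝ) (C : Matrix (Fin q) (Fin n) ℝ)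
    {t : ℝ} (ht : 0 < t) (v : Fin n → ℝ) :
    obsGram A C t *ᵥ v = 0 ↔ ∀ k : ℕ, (C * A ^ k) *ᵥ v = 0 := by
  refine ⟨fun hv => mul_pow_mulVec_eq_zero_of_eqOn_Icc ht fun τ hτ => ?_, fun h => ?_⟩
  · set Y : ℝ → Matrix (Fin q) (Fin n) ℝ := fun τ => C * exp (τ • A)
    have hY : Continuous Y := continuous_const.matrix_mul (continuous_exp_smul_s2 A)
    have hquad : ∀ τ, v ⬝ᵥ ((Y τ)ᵀ *ᵥ (Y τ *ᵥ v)) = Y τ *ᵥ v ⬝ᵥ Y τ *ᵥ v := fun τ => by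
      rw [dotProduct_mulVec, vecMul_transpose]
    have hnonneg : ∀ τ, 0 ≤ Y τ *ᵥ v ⬝ᵥ Y τ *ᵥ v := fun τ =>
      Finset.sum_nonneg fun i _ => mul_self_nonneg _
    have hint : ∫ τ in (0 : ℝ)..t, Y τ *ᵥ v ⬝ᵥ Y τ *ᵥ v = 0 := by
      have := congrArg (v ⬝ᵥ ·) hv
      simp only [obsGram_mulVec, dotProduct_zero] at this
      rwa [dotProduct_intervalIntegral (hY.matrix_transpose.matrix_mulVec
        (hY.matrix_mulVec continuous_const)), funext hquad] at this
    by_contra hne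
    refine (intervalIntegral.integral_pos ht ?_ (fun τ _ => hnonneg τ)
      ⟨τ, hτ, (hnonneg τ).lt_of_ne' (mt dotProduct_self_eq_zero.mp hne)⟩).ne' hint
    exact ((hY.matrix_mulVec continuous_const).dotProduct
      (hY.matrix_mulVec continuous_const)).continuousOn
  · have hg : ∀ τ : ℝ, (C * exp (τ • A)) *ᵥ v = 0 := mul_exp_smul_mulVec_eq_zero h
    ext i
    simp [obsGram_mulVec, hg]

theorem obsMat_mulVec_eq_zero_iff (C : Matrix (Fin q) (Fin n) ℝ) (A : Matrix (Fin n) (Fin n) ℝ)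
    (v : Fin n → ℝ) : obsMat C A *ᵥ v = 0 ↔ ∀ k : ℕ, (C * A ^ k) *ᵥ v = 0 :=
  ⟨fun h => mul_pow_mulVec_eq_zero_of_lt_card fun k hk =>
      funext fun i => congrFun h (⟨k, by simpa using hk⟩, i),
    fun h => funext fun ki => congrFun (h ki.1) ki.2⟩

theorem ker_obsGram_eq_ker_obsMat (A : Matrix (Fin n) (Fin n) ℝ) (C : Matrix (Fin q) (Fin n) ℝ)
    {t : ℝ} (ht : 0 < t) :
    LinearMap.ker (obsGram A C t).mulVecLin = LinearMap.ker (obsMat C A).mulVecLin := by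
  ext v
  simp only [LinearMap.mem_ker, mulVecLin_apply, obsGram_mulVec_eq_zero_iff A C ht,
    obsMat_mulVec_eq_zero_iff]

end Gramian

/-- **Strong duality (Theorem 2).** Suppose `rank(F) = r` and the images `F(Im W(t₁))`
and `F(Ker W(t₁))` are orthogonal in `ℝ^r` (Euclidean inner product). Then `(C, A; F)`
is functionally observable (`rank([O; F]) = rank(O)`) if and only if the dual system
`(Aᵀ, Cᵀ; F)` is output controllable (`rank(F·Oᵀ) = rank(F)`). -/
theorem strong_duality {n q r : ℕ}
    (A : Matrix (Fin n) (Fin n) ℝ) (C : Matrix (Fin q) (Fin n) ℝ)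
    (F : Matrix (Fin r) (Fin n) ℝ) (t₁ : ℝ) (ht₁ : 0 < t₁)
    (hF : F.rank = r)
    (horth : ∀ u v : Fin n → ℝ, (obsGram A C t₁).mulVec v = 0 →
      F.mulVec ((obsGram A C t₁).mulVec u) ⬝ᵥ F.mulVec v = 0) :
    (Matrix.fromRows (obsMat C A) F).rank = (obsMat C A).rank ↔
      (F * (obsMat C A)ᵀ).rank = F.rank := by
  rw [rank_fromRows_eq_rank_iff]
  exact ⟨rank_mul_transpose_eq_of_ker_le,
    ker_le_ker_of_rank_mul_transpose_eq (obsGram_transpose A C t₁)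
      (ker_obsGram_eq_ker_obsMat A C ht₁) (by simpa using hF) horth⟩
end

section
/- Let W ∈ ℝ^{n×n} be symmetric, F ∈ ℝ^{r×n}, G ∈ ℝ^{r×n} with G·W = F. If x ∈ ℝ^n and λ ≠ 0 satisfy W·x = λ·Fᵀ·F·x (a generalized eigenvector of the matrix pencil (W, FᵀF)), then G·Fᵀ·(Fx) = (1/λ)·(Fx); i.e., Fx is an eigenvector of G·Fᵀ with eigenvalue 1/λ. Consequently, the nonzero generalized eigenvalues of the pencil (W, FᵀF) with Fx ≠ 0 are reciprocals of eigenvalues of G·Fᵀ. -/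
open Matrix

/-- Pencil eigenvalue / target-observation-energy relation. Let `W` be symmetric,
`G·W = F`, and let `(λ, x)` with `λ ≠ 0` satisfy the generalized eigenproblem
`W·x = λ·Fᵀ·F·x` of the matrix pencil `(W, FᵀF)`. Then `G·Fᵀ·(Fx) = (1/λ)·(Fx)`,
i.e. `Fx` is an eigenvector of `G·Fᵀ` with eigenvalue `1/λ`. -/
theorem pencil_eigenvalue_reciprocal {n r : ℕ}
    (W : Matrix (Fin n) (Fin n) ℝ) (hW : Wᵀ = W)
    (F G : Matrix (Fin r) (Fin n) ℝ) (hGW : G * W = F)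
    (x : Fin n → ℝ) (lam : ℝ) (hlam : lam ≠ 0)
    (hpencil : W.mulVec x = lam • (Fᵀ * F).mulVec x) :
    (G * Fᵀ).mulVec (F.mulVec x) = (1 / lam) • F.mulVec x := by
  have h := congrArg G.mulVec hpencil
  rw [mulVec_smul, mulVec_mulVec, hGW, mulVec_mulVec, ← Matrix.mul_assoc] at h
  rw [mulVec_mulVec, h, smul_smul, one_div, inv_mul_cancel₀ hlam, one_smul]
end

section
/- Let A ∈ ℝ^{n×n}, B ∈ ℝ^{n×p}, C ∈ ℝ^{q×n}, K ∈ ℝ^{p×n}, and let N ∈ ℝ^{n₀×n₀}, J ∈ ℝ^{n₀×q}, D ∈ ℝ^{p×n₀}, E ∈ ℝ^{p×q}, T ∈ ℝ^{n₀×n} satisfy the functional-observer conditions N·T + J·C = T·A and D·T + E·C = −K. Then the (n+n₀)×(n+n₀) closed-loop block matrix M with blocks [[A + B·E·C, B·D], [J·C + T·B·E·C, N + T·B·D]] (the system ẋ = Ax + Bu, ẇ = Nw + Jy + TBu, u = Dw + Ey, y = Cx written in (x, w) coordinates) is similar, via the invertible matrix S with blocks [[I_n, 0], [−T, I_{n₀}]],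 to the block upper-triangular matrix with blocks [[A − B·K, B·D], [0, N]]; explicitly, S·M·S⁻¹ = [[A − BK, BD], [0, N]]. -/
open Matrix

/-- Similarity transform of the observer-based closed loop. If the functional-observer
conditions `N·T + J·C = T·A` and `D·T + E·C = −K` hold, then the closed-loop matrix
`M = [[A + BEC, BD], [JC + TBEC, N + TBD]]` (the system `ẋ = Ax + Bu`,
`ẇ = Nw + Jy + TBu`, `u = Dw + Ey`, `y = Cx` in `(x, w)` coordinates) is similar, via
the invertible matrix `S = [[I, 0], [−T, I]]` (whose inverse is `[[I, 0], [T, I]]`),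
to the block upper-triangular matrix `[[A − BK, BD], [0, N]]`:
explicitly `S · M · S⁻¹ = [[A − BK, BD], [0, N]]`. -/
theorem closed_loop_similarity {n p q n₀ : ℕ}
    (A : Matrix (Fin n) (Fin n) ℝ) (B : Matrix (Fin n) (Fin p) ℝ)
    (C : Matrix (Fin q) (Fin n) ℝ) (K : Matrix (Fin p) (Fin n) ℝ)
    (N : Matrix (Fin n₀) (Fin n₀) ℝ) (J : Matrix (Fin n₀) (Fin q) ℝ)
    (D : Matrix (Fin p) (Fin n₀) ℝ) (E : Matrix (Fin p) (Fin q) ℝ)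
    (T : Matrix (Fin n₀) (Fin n) ℝ)
    (hNT : N * T + J * C = T * A) (hDT : D * T + E * C = -K) :
    IsUnit (Matrix.fromBlocks (1 : Matrix (Fin n) (Fin n) ℝ) 0 (-T)
        (1 : Matrix (Fin n₀) (Fin n₀) ℝ)) ∧
    (Matrix.fromBlocks (1 : Matrix (Fin n) (Fin n) ℝ) 0 (-T)
        (1 : Matrix (Fin n₀) (Fin n₀) ℝ))⁻¹ =
      Matrix.fromBlocks 1 0 T 1 ∧
    Matrix.fromBlocks (1 : Matrix (Fin n) (Fin n) ℝ) 0 (-T)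
        (1 : Matrix (Fin n₀) (Fin n₀) ℝ) *
      Matrix.fromBlocks (A + B * E * C) (B * D) (J * C + T * B * E * C) (N + T * B * D) *
      (Matrix.fromBlocks (1 : Matrix (Fin n) (Fin n) ℝ) 0 (-T)
        (1 : Matrix (Fin n₀) (Fin n₀) ℝ))⁻¹ =
      Matrix.fromBlocks (A - B * K) (B * D) 0 N := by
  set S := Matrix.fromBlocks (1 : Matrix (Fin n) (Fin n) ℝ) 0 (-T)
    (1 : Matrix (Fin n₀) (Fin n₀) ℝ)
  have hmul : S * Matrix.fromBlocks 1 0 T 1 = 1 := by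
    simp [S, Matrix.fromBlocks_multiply, ← Matrix.fromBlocks_one]
  have hinv : S⁻¹ = Matrix.fromBlocks 1 0 T 1 :=
    Matrix.inv_eq_right_inv hmul
  refine ⟨(Matrix.isUnit_iff_isUnit_det S).mpr (Matrix.isUnit_det_of_right_inverse hmul), hinv, ?_⟩
  rw [hinv]
  simp only [S, Matrix.fromBlocks_multiply, Matrix.one_mul, Matrix.zero_mul,
    Matrix.mul_one, Matrix.mul_zero, add_zero, zero_add, Matrix.neg_mul]
  rw [Matrix.fromBlocks_inj]
  have hK : B * D * T + B * (E * C) = -(B * K) := by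
    rw [Matrix.mul_assoc B D T, ← Matrix.mul_add, hDT, Matrix.mul_neg]
  have hT : T * (B * D * T) + T * (B * (E * C)) = -(T * (B * K)) := by
    rw [← Matrix.mul_add, hK, Matrix.mul_neg]
  refine ⟨?_, ⟨rfl, ?_, by simp only [Matrix.mul_assoc]; abel⟩⟩
  · simp only [Matrix.mul_assoc] at hK ⊢
    linear_combination (norm := abel) hK
  · simp only [Matrix.mul_add, Matrix.add_mul, Matrix.neg_mul, Matrix.mul_assoc,
      neg_add] at hT hNT ⊢
    linear_combination (norm := abel) hNT
end

section
/- Let A ∈ ℝ^{n×n}, B ∈ ℝ^{n×p}, C ∈ ℝ^{q×n}, K ∈ ℝ^{p×n}, and let N ∈ ℝ^{n₀×n₀}, J ∈ ℝ^{n₀×q}, D ∈ ℝ^{p×n₀}, E ∈ ℝ^{p×q}, T ∈ ℝ^{n₀×n} satisfy N·T + J·C = T·A and D·T + E·C = −K. Then the characteristic polynomial of the closed-loop block matrix M = [[A + B·E·C, B·D], [J·C + T·B·E·C, N + T·B·D]] factors as p(λ) = det(λ·I_n − A + B·K) · det(λ·I_{n₀} − N); i.e., the closed-loop poles are exactly the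 eigenvalues of A − BK together with the eigenvalues of N, so the designs of the target feedback controller and of the functional observer are mutually independent (separation principle, Corollary 3). -/
open Matrix Polynomial

lemma charpoly_conj_aux {m : Type*} [Fintype m] [DecidableEq m]
    (P M Q : Matrix m m ℝ) (hPQ : P * Q = 1) :
    (P * M * Q).charpoly = M.charpoly := by
  have hmap : charmatrix (P * M * Q) =
      P.map Polynomial.C * charmatrix M * Q.map Polynomial.C := by
    rw [charmatrix, charmatrix]
    simp only [mul_sub, sub_mul, RingHom.mapMatrix_apply]
    congr 1
    · have : (P.map Polynomial.C) * (Matrix.scalar m (X : ℝ[X])) =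
          (Matrix.scalar m (X : ℝ[X])) * P.map Polynomial.C :=
        (scalar_commute (X : ℝ[X]) (fun r => Polynomial.commute_X r)
          (P.map Polynomial.C)).symm.eq
      rw [this, mul_assoc, ← Matrix.map_mul, hPQ, Matrix.map_one _ Polynomial.C_0 Polynomial.C_1,
        mul_one]
    · simp [Matrix.map_mul]
  rw [Matrix.charpoly, hmap, det_mul, det_mul, Matrix.charpoly]
  have h1 : (P.map Polynomial.C).det * (Q.map Polynomial.C).det = 1 := by
    rw [← det_mul, ← Matrix.map_mul, hPQ, Matrix.map_one _ Polynomial.C_0 Polynomial.C_1, det_one]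
  calc (P.map Polynomial.C).det * (charmatrix M).det * (Q.map Polynomial.C).det
      = (charmatrix M).det * ((P.map Polynomial.C).det * (Q.map Polynomial.C).det) := by ring
    _ = (charmatrix M).det := by rw [h1, mul_one]

/-- **Separation principle (Corollary 3).** If the functional-observer conditions
`N·T + J·C = T·A` and `D·T + E·C = −K` hold, then the characteristic polynomial of the
closed-loop matrix `M = [[A + BEC, BD], [JC + TBEC, N + TBD]]` factors as
`p(λ) = det(λI − A + BK) · det(λI − N)`: the closed-loop poles are exactly the
eigenvalues of `A − BK` together with those of `N`, so the target feedback controller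
and the functional observer can be designed independently. -/
theorem separation_principle {n p q n₀ : ℕ}
    (A : Matrix (Fin n) (Fin n) ℝ) (B : Matrix (Fin n) (Fin p) ℝ)
    (C : Matrix (Fin q) (Fin n) ℝ) (K : Matrix (Fin p) (Fin n) ℝ)
    (N : Matrix (Fin n₀) (Fin n₀) ℝ) (J : Matrix (Fin n₀) (Fin q) ℝ)
    (D : Matrix (Fin p) (Fin n₀) ℝ) (E : Matrix (Fin p) (Fin q) ℝ)
    (T : Matrix (Fin n₀) (Fin n) ℝ)
    (hNT : N * T + J * C = T * A) (hDT : D * T + E * C = -K) :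
    (Matrix.fromBlocks (A + B * E * C) (B * D)
        (J * C + T * B * E * C) (N + T * B * D)).charpoly =
      (A - B * K).charpoly * N.charpoly := by
  have hEC : E * C = -K - D * T := eq_sub_of_add_eq' hDT
  have hJC : J * C = T * A - N * T := eq_sub_of_add_eq' hNT
  set M := Matrix.fromBlocks (A + B * E * C) (B * D)
        (J * C + T * B * E * C) (N + T * B * D) with hM
  set P : Matrix (Fin n ⊕ Fin n₀) (Fin n ⊕ Fin n₀) ℝ :=
    Matrix.fromBlocks 1 0 (-T) 1 with hP
  set Q : Matrix (Fin n ⊕ Fin n₀) (Fin n ⊕ Fin n₀) ℝ :=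
    Matrix.fromBlocks 1 0 T 1 with hQ
  have hPQ : Q * P = 1 := by
    rw [hP, hQ, Matrix.fromBlocks_multiply, ← Matrix.fromBlocks_one]
    simp
  have key : Q * (Matrix.fromBlocks (A - B * K) (B * D) 0 N) * P = M := by
    rw [hP, hQ, hM, Matrix.fromBlocks_multiply, Matrix.fromBlocks_multiply]
    rw [Matrix.mul_assoc B E C, Matrix.mul_assoc (T * B) E C, hEC, hJC]
    congr 1 <;>
      simp [Matrix.mul_sub, Matrix.sub_mul, Matrix.add_mul, Matrix.mul_add, Matrix.mul_neg, Matrix.neg_mul, Matrix.mul_assoc] <;>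
      (try abel) <;> exact ⟨trivial, trivial, trivial⟩
  rw [← key, charpoly_conj_aux _ _ _ hPQ, Matrix.charpoly_fromBlocks_zero₂₁]
end

section
/- Let O ∈ ℝ^{m×n} and F ∈ ℝ^{r×n}. If rank([O; F]) = rank(O), then there exists G ∈ ℝ^{r×m} with F = G·O, and consequently rank(F·Oᵀ) = rank(F). Conversely, if additionally rank(F) = r and F(Ker O) = {0}, then rank(F·Oᵀ) = r implies rank([O; F]) = rank(O). (This is the matrix-level content underlying the weak and strong duality between the functional observability rank test rank([O; F]) = rank(O) and the output controllability rank test rank(F·Oᵀ) = rank(F) for the dual pair.) -/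
/-!
`rank [O; F] = rank O` says that the row space of `F` lies in that of `O`, i.e. `F = G * O`.
When `Ker O ⊆ Ker F`, the kernel of `[O; F]` is `Ker O`, so this rank equality follows from
rank–nullity. Finally, over an ordered field `Ker (O * Oᵀ) = Ker Oᵀ`, so `Oᵀ = Z * (O * Oᵀ)` for
some `Z`; for `F = G * O` this gives `Fᵀ = Z * (F * Oᵀ)ᵀ`, hence `rank F ≤ rank (F * Oᵀ)`.
-/

open Matrix

namespace Matrix

variable {R : Type*} {m n r : Type*}

theorem span_row_le_span_row_iff_exists_eq_mul [CommSemiring R] [Fintype m]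
    (O : Matrix m n R) (F : Matrix r n R) :
    Submodule.span R (Set.range F.row) ≤ Submodule.span R (Set.range O.row) ↔
      ∃ G : Matrix r m R, F = G * O := by
  simp only [Submodule.span_le, Set.range_subset_iff, SetLike.mem_coe,
    Submodule.mem_span_range_iff_exists_fun]
  constructor
  · intro h
    choose G hG using h
    refine ⟨of G, ?_⟩
    ext j k
    simpa [mul_apply, Finset.sum_apply, row, eq_comm] using congrFun (hG j) k
  · rintro ⟨G, rfl⟩ j
    exact ⟨G j, by ext k; simp [mul_apply, Finset.sum_apply, row]⟩

theorem span_row_fromRows [Semiring R] {m₁ m₂ : Type*} (A : Matrix m₁ n R)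
    (B : Matrix m₂ n R) :
    Submodule.span R (Set.range (fromRows A B).row) =
      Submodule.span R (Set.range A.row) ⊔ Submodule.span R (Set.range B.row) := by
  rw [← Submodule.span_union, ← Set.Sum.elim_range]
  rfl

variable [Field R] [Fintype n]

theorem rank_fromRows_eq_rank_iff_s19 [Fintype m] [Fintype r] (O : Matrix m n R) (F : Matrix r n R) :
    (fromRows O F).rank = O.rank ↔ ∃ G : Matrix r m R, F = G * O := by
  rw [← span_row_le_span_row_iff_exists_eq_mul, rank_eq_finrank_span_row,
    rank_eq_finrank_span_row, span_row_fromRows, ← sup_eq_left]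
  exact ⟨fun h => (Submodule.eq_of_le_of_finrank_eq le_sup_left h.symm).symm,
    fun h => by rw [h]⟩

theorem rank_fromRows_eq_rank_of_mulVec_eq_zero (O : Matrix m n R) (F : Matrix r n R)
    (h : ∀ x, O *ᵥ x = 0 → F *ᵥ x = 0) : (fromRows O F).rank = O.rank := by
  have hker : LinearMap.ker (fromRows O F).mulVecLin = LinearMap.ker O.mulVecLin := by
    ext x
    simp only [LinearMap.mem_ker, mulVecLin_apply, fromRows_mulVec, ← Sum.elim_zero_zero,
      Sum.elim_eq_iff]
    exact ⟨And.left, fun hx => ⟨hx, h x hx⟩⟩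
  have := (fromRows O F).mulVecLin.finrank_range_add_finrank_ker
  rw [hker, ← O.mulVecLin.finrank_range_add_finrank_ker] at this
  exact Nat.add_right_cancel this

theorem exists_eq_mul_of_mulVec_eq_zero [Fintype m] [Fintype r] (O : Matrix m n R)
    (F : Matrix r n R) (h : ∀ x, O *ᵥ x = 0 → F *ᵥ x = 0) :
    ∃ G : Matrix r m R, F = G * O :=
  (rank_fromRows_eq_rank_iff_s19 O F).1 (rank_fromRows_eq_rank_of_mulVec_eq_zero O F h)

theorem rank_mul_transpose_eq_of_eq_mul [LinearOrder R] [IsStrictOrderedRing R] [Fintype m]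
    [Fintype r] {O : Matrix m n R} {F : Matrix r n R} {G : Matrix r m R} (hG : F = G * O) :
    (F * Oᵀ).rank = F.rank := by
  refine le_antisymm (rank_mul_le_left _ _) ?_
  obtain ⟨Z, hZ⟩ := exists_eq_mul_of_mulVec_eq_zero (O * Oᵀ) Oᵀ fun x hx => by
    have hker := SetLike.ext_iff.1 (ker_mulVecLin_transpose_mul_self Oᵀ) x
    rw [transpose_transpose] at hker
    exact hker.1 hx
  have hF : Fᵀ = Z * (F * Oᵀ)ᵀ := by
    conv_lhs => rw [hG, transpose_mul, hZ]
    simp only [hG, transpose_mul, transpose_transpose, Matrix.mul_assoc]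
  calc F.rank = Fᵀ.rank := (rank_transpose F).symm
    _ ≤ (F * Oᵀ)ᵀ.rank := hF ▸ rank_mul_le_right _ _
    _ = (F * Oᵀ).rank := rank_transpose _

end Matrix

/-- Matrix-level weak/strong duality between the functional observability rank test
`rank([O; F]) = rank(O)` and the output controllability rank test
`rank(F·Oᵀ) = rank(F)`. If `rank([O; F]) = rank(O)`, then `F = G·O` for some `G` and
consequently `rank(F·Oᵀ) = rank(F)`. Conversely, if additionally `rank(F) = r` and
`F(Ker O) = {0}`, then `rank(F·Oᵀ) = r` implies `rank([O; F]) = rank(O)`. -/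
theorem matrix_weak_and_strong_duality {m n r : ℕ}
    (O : Matrix (Fin m) (Fin n) ℝ) (F : Matrix (Fin r) (Fin n) ℝ) :
    ((Matrix.fromRows O F).rank = O.rank →
      (∃ G : Matrix (Fin r) (Fin m) ℝ, F = G * O) ∧ (F * Oᵀ).rank = F.rank) ∧
    (F.rank = r → (∀ x : Fin n → ℝ, O.mulVec x = 0 → F.mulVec x = 0) →
      (F * Oᵀ).rank = r → (Matrix.fromRows O F).rank = O.rank) := by
  refine ⟨fun h => ?_, fun _ hker _ => rank_fromRows_eq_rank_of_mulVec_eq_zero O F hker⟩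
  obtain ⟨G, hG⟩ := (rank_fromRows_eq_rank_iff_s19 O F).1 h
  exact ⟨⟨G, hG⟩, rank_mul_transpose_eq_of_eq_mul hG⟩
end
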